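/- Let G be a countable graph with heat kernel p(t,x,y) satisfying p(0,x,x)=1, p continuous in t, and |∂_t p(t,x,x)| bounded near t=0, and suppose Σ_{y} p(t,x,y) = 1 for all t > 0 (stochastic completeness). Fix 0 < α < 2 and define Q_α(x,y) = (1/|Γ(-α/2)|) ∫_0^∞ t^{-1-α/2} p(t,x,y) dt for x ≠ y. Then Σ_{y ≠ x} Q_α(x,y) < ∞ for every vertex x. -/

import Mathlib

open Real MeasureTheory

/-- The jump kernel coefficients of the fractional Laplacian, as extended nonnegative reals. -/
noncomputable def Qcoef {G : Type*} (α : ℝ) (p : ℝ → G → G → ℝ) (x y : G) : ENNReal :=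
  ENNReal.ofReal (1 / |Real.Gamma (-(α / 2))|) *
    ∫⁻ t in Set.Ioi (0 : ℝ), ENNReal.ofReal (t ^ (-1 - α / 2) * p t x y)

/-!
Write `β = -1 - α/2 ∈ (-2, -1)`. Since the kernel has no measurability in `t`, the
superadditivity `∑' ∫⁻ ≤ ∫⁻ ∑'` replaces Tonelli, and stochastic completeness turns the inner sum
into `t ^ β (1 - p(t,x,x))`. By the mean value theorem `1 - p(t,x,x) ≤ c t` near `0`, so the
integrand is `O(t ^ (β + 1))` there, integrable since `β + 1 > -1`; away from `0` it is at most
`t ^ β`, integrable at infinity since `β < -1`.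
-/

open Set

theorem tsum_lintegral_le_lintegral_tsum {α ι : Type*} [MeasurableSpace α] (μ : Measure α)
    (f : ι → α → ENNReal) : ∑' i, ∫⁻ a, f i a ∂μ ≤ ∫⁻ a, ∑' i, f i a ∂μ := by
  rw [ENNReal.tsum_eq_iSup_sum]
  refine iSup_le fun s => ?_
  have h_finset : ∑ i ∈ s, ∫⁻ a, f i a ∂μ ≤ ∫⁻ a, ∑ i ∈ s, f i a ∂μ := by
    induction s using Finset.cons_induction with
    | empty => simp
    | cons j s _ ih =>
      simp only [Finset.sum_cons]
      exact (add_le_add le_rfl ih).trans (le_lintegral_add _ _)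
  exact h_finset.trans (lintegral_mono fun a => ENNReal.sum_le_tsum s)

theorem tsum_ofReal_mul_ne_eq {G : Type*} {f : G → ℝ} (hf_nonneg : ∀ y, 0 ≤ f y)
    (hf_one : ∑' y, f y = 1) {a : ℝ} (ha : 0 ≤ a) (x : G) :
    ∑' y : {y // y ≠ x}, ENNReal.ofReal (a * f y) = ENNReal.ofReal (a * (1 - f x)) := by
  have hf : Summable f := by
    by_contra h
    simp [tsum_eq_zero_of_not_summable h] at hf_one
  have h_compl : ∑' y : {y // y ≠ x}, f y = 1 - f x := by
    rw [← hf_one, ← hf.tsum_subtype_add_tsum_subtype_compl {x}, tsum_singleton,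
      add_sub_cancel_left]
    rfl
  rw [← ENNReal.ofReal_tsum_of_nonneg (fun y : {y // y ≠ x} => mul_nonneg ha (hf_nonneg y))
    ((hf.subtype _).mul_left a), tsum_mul_left, h_compl]

theorem sub_le_mul_of_abs_deriv_le {f : ℝ → ℝ} {a b c : ℝ} (hf : ContinuousOn f (Icc a b))
    (hf' : ∀ t ∈ Ioo a b, DifferentiableAt ℝ f t ∧ |deriv f t| ≤ c) {t : ℝ} (ht : t ∈ Icc a b) :
    f a - f t ≤ c * (t - a) := by
  have h := (convex_Icc a b).mul_sub_le_image_sub_of_le_deriv hf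
    (by rw [interior_Icc]; exact fun s hs => (hf' s hs).1.differentiableWithinAt)
    (by rw [interior_Icc]; exact fun s hs => neg_le_of_abs_le (hf' s hs).2)
    a (left_mem_Icc.2 (ht.1.trans ht.2)) t ht ht.1
  linarith

theorem setLIntegral_rpow_mul_lt_top {g : ℝ → ℝ} {β c ε : ℝ} (hβ₂ : -2 < β) (hβ₁ : β < -1)
    (hε : 0 < ε) (hg_small : ∀ t ∈ Ioc 0 ε, g t ≤ c * t) (hg_le_one : ∀ t > ε, g t ≤ 1) :
    ∫⁻ t in Ioi 0, ENNReal.ofReal (t ^ β * g t) < ⊤ := by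
  rw [← Ioc_union_Ioi_eq_Ioi hε.le]
  refine (lintegral_union_le _ _ _).trans_lt (ENNReal.add_lt_top.2 ⟨?_, ?_⟩)
  · have h_int : IntegrableOn (fun t : ℝ => c * t ^ (β + 1)) (Ioc 0 ε) :=
      ((intervalIntegral.intervalIntegrable_rpow' (by linarith)).1).const_mul c
    refine lt_of_le_of_lt (setLIntegral_mono (by fun_prop) fun t ht => ?_) h_int.lintegral_lt_top
    refine ENNReal.ofReal_le_ofReal ?_
    calc t ^ β * g t ≤ t ^ β * (c * t) :=
          mul_le_mul_of_nonneg_left (hg_small t ht) (rpow_nonneg ht.1.le β)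
      _ = c * t ^ (β + 1) := by rw [rpow_add_one ht.1.ne']; ring
  · have h_int : IntegrableOn (fun t : ℝ => t ^ β) (Ioi ε) := integrableOn_Ioi_rpow_of_lt hβ₁ hε
    refine lt_of_le_of_lt (setLIntegral_mono (by fun_prop) fun t ht => ?_) h_int.lintegral_lt_top
    refine ENNReal.ofReal_le_ofReal ?_
    calc t ^ β * g t ≤ t ^ β * 1 :=
          mul_le_mul_of_nonneg_left (hg_le_one t ht) (rpow_nonneg (hε.trans ht).le β)
      _ = t ^ β := mul_one _

theorem jump_kernel_summable_general {G : Type*}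
    (p : ℝ → G → G → ℝ)
    (hp_nonneg : ∀ t x y, 0 ≤ t → 0 ≤ p t x y)
    (hp_init : ∀ x, p 0 x x = 1)
    (hp_cont : ∀ x, ContinuousOn (fun t => p t x x) (Set.Ici (0 : ℝ)))
    (hp_deriv : ∀ x, ∃ ε > (0 : ℝ), ∃ c : ℝ, ∀ t ∈ Set.Ioo (0 : ℝ) ε,
      DifferentiableAt ℝ (fun s => p s x x) t ∧ |deriv (fun s => p s x x) t| ≤ c)
    (hp_stoch : ∀ x, ∀ t > (0 : ℝ), ∑' y, p t x y = 1)
    (α : ℝ) (hα0 : 0 < α) (hα2 : α < 2) (x : G) :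
    ∑' y : {y : G // y ≠ x}, Qcoef α p x (y : G) < ⊤ := by
  obtain ⟨ε, hε, c, hc⟩ := hp_deriv x
  have h_mass : ∀ t ∈ Ioi (0 : ℝ), ∑' y : {y // y ≠ x}, ENNReal.ofReal (t ^ (-1 - α / 2) * p t x y)
      = ENNReal.ofReal (t ^ (-1 - α / 2) * (1 - p t x x)) := fun t ht =>
    tsum_ofReal_mul_ne_eq (hp_nonneg t x · (le_of_lt ht)) (hp_stoch x t ht)
      (rpow_nonneg (le_of_lt ht) _) x
  have h_small : ∀ t ∈ Ioc 0 ε, 1 - p t x x ≤ c * t := fun t ht => by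
    simpa [hp_init] using sub_le_mul_of_abs_deriv_le ((hp_cont x).mono Icc_subset_Ici_self) hc
      (Ioc_subset_Icc_self ht)
  have h_le_one : ∀ t > ε, 1 - p t x x ≤ 1 := fun t ht => by
    linarith [hp_nonneg t x x (by linarith)]
  simp only [Qcoef]
  rw [ENNReal.tsum_mul_left]
  refine ENNReal.mul_lt_top ENNReal.ofReal_lt_top ?_
  calc _ ≤ ∫⁻ t in Ioi 0, ∑' y : {y // y ≠ x}, ENNReal.ofReal (t ^ (-1 - α / 2) * p t x y) :=
        tsum_lintegral_le_lintegral_tsum _ _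
    _ = ∫⁻ t in Ioi 0, ENNReal.ofReal (t ^ (-1 - α / 2) * (1 - p t x x)) :=
        setLIntegral_congr_fun measurableSet_Ioi h_mass
    _ < ⊤ := setLIntegral_rpow_mul_lt_top (by linarith) (by linarith) hε h_small h_le_one

theorem jump_kernel_summable {G : Type*} [Countable G]
    (p : ℝ → G → G → ℝ)
    (hp_nonneg : ∀ t x y, 0 ≤ t → 0 ≤ p t x y)
    (hp_init : ∀ x, p 0 x x = 1)
    (hp_cont : ∀ x, ContinuousOn (fun t => p t x x) (Set.Ici (0 : ℝ)))
    (hp_deriv : ∀ x, ∃ ε > (0 : ℝ), ∃ c : ℝ, ∀ t ∈ Set.Ioo (0 : ℝ) ε,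
      DifferentiableAt ℝ (fun s => p s x x) t ∧ |deriv (fun s => p s x x) t| ≤ c)
    (hp_stoch : ∀ x, ∀ t > (0 : ℝ), ∑' y, p t x y = 1)
    (hp_summable : ∀ x, ∀ t > (0 : ℝ), Summable fun y => p t x y)
    (α : ℝ) (hα0 : 0 < α) (hα2 : α < 2) (x : G) :
    ∑' y : {y : G // y ≠ x}, Qcoef α p x (y : G) < ⊤ :=
  jump_kernel_summable_general p hp_nonneg hp_init hp_cont hp_deriv hp_stoch α hα0 hα2 x
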